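/- For a hyperwedge w in a pairwise graph (all hyperedges of size 2), the hyperwedge transitivity T(w, E; f) with f as in the penalized definition equals 1 if the edge {u, v} joining the two non-shared endpoints u ∈ L(w), v ∈ R(w) belongs to E, and 0 otherwise. -/

import Mathlib

/-- Max over candidate hyperedges, with the empty max equal to 0. -/
noncomputable def hmax (C : Finset (Finset ℕ)) (g : Finset ℕ → ℝ) : ℝ := C.fold max 0 g

/-- Penalized interaction function. -/
noncomputable def fpen (L R e : Finset ℕ) : ℝ :=
  (((L ∩ e).card : ℝ) * (R ∩ e).card) /
    (((L ∪ (e \ R)).card : ℝ) * (R ∪ (e \ L)).card)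

/-- HyperTrans of the hyperwedge with wings L, R w.r.t. candidate set C. -/
noncomputable def HT (L R : Finset ℕ) (C : Finset (Finset ℕ)) (f : Finset ℕ → ℝ) : ℝ :=
  (∑ v1 ∈ L, ∑ v2 ∈ R, hmax C (fun e => if v1 ∈ e ∧ v2 ∈ e then f e else 0)) /
    ((L.card : ℝ) * R.card)

/-!
In a graph, the only edge containing both wing nodes `u` and `v` is `{u, v}` itself, and the
penalized interaction of the wedge with it is `1`. So `T` is a maximum over `E` of the
indicator of `{u, v}`.
-/

theorem Finset.pair_sdiff_pair {α : Type*} [DecidableEq α] {x u v : α} (hux : u ≠ x)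
    (huv : u ≠ v) : ({x, u} : Finset α) \ {x, v} = {u} := by
  ext a
  simp only [mem_sdiff, mem_insert, mem_singleton]
  grind

theorem Finset.eq_pair_of_card_eq_two {α : Type*} [DecidableEq α] {s : Finset α} {u v : α}
    (hs : s.card = 2) (huv : u ≠ v) (hu : u ∈ s) (hv : v ∈ s) : s = {u, v} :=
  (eq_of_subset_of_card_le (insert_subset hu (singleton_subset_iff.mpr hv))
    (by rw [hs, card_pair huv])).symm

theorem hmax_congr {C : Finset (Finset ℕ)} {g g' : Finset ℕ → ℝ} (h : ∀ e ∈ C, g e = g' e) :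
    hmax C g = hmax C g' :=
  Finset.fold_congr h

theorem hmax_ite_eq (C : Finset (Finset ℕ)) (s : Finset ℕ) {a : ℝ} (ha : 0 ≤ a) :
    hmax C (fun e => if e = s then a else 0) = if s ∈ C then a else 0 := by
  unfold hmax
  split_ifs with hs
  · refine le_antisymm ((Finset.fold_max_le _).mpr ⟨ha, fun e _ => ?_⟩)
      ((Finset.le_fold_max _).mpr (Or.inr ⟨s, hs, by simp⟩))
    split_ifs <;> simp [ha]
  · refine le_antisymm ((Finset.fold_max_le _).mpr ⟨le_rfl, fun e he => ?_⟩)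
      ((Finset.le_fold_max _).mpr (Or.inl le_rfl))
    rw [if_neg (ne_of_mem_of_not_mem he hs)]

theorem HT_singleton_singleton (u v : ℕ) (C : Finset (Finset ℕ)) (f : Finset ℕ → ℝ) :
    HT {u} {v} C f = hmax C (fun e => if u ∈ e ∧ v ∈ e then f e else 0) := by
  simp [HT]

theorem fpen_singleton_singleton_pair {u v : ℕ} (huv : u ≠ v) :
    fpen {u} {v} {u, v} = 1 := by
  have hR : ({v} : Finset ℕ) ∪ ({u, v} \ {u}) = {v} := by grind
  simp [fpen, hR, huv]

theorem wedge_weight_of_card_eq_two {u v : ℕ} (huv : u ≠ v) {e : Finset ℕ} (he : e.card = 2) :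
    (if u ∈ e ∧ v ∈ e then fpen {u} {v} e else 0) = if e = {u, v} then 1 else 0 := by
  by_cases hmem : u ∈ e ∧ v ∈ e
  · obtain rfl := Finset.eq_pair_of_card_eq_two he huv hmem.1 hmem.2
    simp [fpen_singleton_singleton_pair huv]
  · rw [if_neg hmem, if_neg]
    rintro rfl
    simp at hmem

theorem HT_pairwise_graph_general (E : Finset (Finset ℕ)) (h2 : ∀ e ∈ E, e.card = 2)
    (x u v : ℕ) (hux : u ≠ x) (hvx : v ≠ x) (huv : u ≠ v)
    (ei ej : Finset ℕ) (hei : ei = {x, u}) (hej : ej = {x, v}) :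
    HT (ei \ ej) (ej \ ei) E (fpen (ei \ ej) (ej \ ei)) =
      if ({u, v} : Finset ℕ) ∈ E then 1 else 0 := by
  subst hei hej
  rw [Finset.pair_sdiff_pair hux huv, Finset.pair_sdiff_pair hvx huv.symm,
    HT_singleton_singleton, ← hmax_ite_eq E {u, v} zero_le_one]
  exact hmax_congr fun e he => wedge_weight_of_card_eq_two huv (h2 e he)

/-- In a pairwise graph, the hyperwedge transitivity of the wedge on
e_i = {x,u}, e_j = {x,v} equals 1 if {u,v} ∈ E and 0 otherwise. -/
theorem HT_pairwise_graph (E : Finset (Finset ℕ)) (h2 : ∀ e ∈ E, e.card = 2)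
    (x u v : ℕ) (hux : u ≠ x) (hvx : v ≠ x) (huv : u ≠ v)
    (ei ej : Finset ℕ) (hei : ei = {x, u}) (hej : ej = {x, v})
    (hEi : ei ∈ E) (hEj : ej ∈ E) :
    HT (ei \ ej) (ej \ ei) E (fpen (ei \ ej) (ej \ ei)) =
      if ({u, v} : Finset ℕ) ∈ E then 1 else 0 :=
  HT_pairwise_graph_general E h2 x u v hux hvx huv ei ej hei hej
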